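/- For every n ≥ 1 and every j < 2^n, the dominated set D_j = {k < 2^n : k ⪯ j} is a minimal puncturing bit pattern making encoder input bit j incapable: j ∈ U_p(D_j), and for every proper subset Q ⊊ D_j one has j ∉ U_p(Q). -/

import Mathlib

/-- Binary domination: every binary digit of `i` is at most the corresponding digit of `j`. -/
def bdom (i j : ℕ) : Prop := ∀ t, i.testBit t = true → j.testBit t = true

instance (i j : ℕ) : Decidable (bdom i j) :=
  decidable_of_iff (i ||| j = j) (by
    constructor
    · intro h t hi
      have h1 : (i ||| j).testBit t = j.testBit t := by rw [h]
      rw [Nat.testBit_or, hi, Bool.true_or] at h1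
      exact h1.symm
    · intro h
      apply Nat.eq_of_testBit_eq
      intro t
      rw [Nat.testBit_or]
      cases hi : i.testBit t with
      | true => simp [h t hi]
      | false => simp)

/-- One step of zero-LLR propagation, computing the stage-`t` zero-LLR set from the
stage-`t+1` zero-LLR set `S`, for a polar code of length `2^n`. -/
def zstep (n t : ℕ) (S : Finset ℕ) : Finset ℕ :=
  (Finset.range (2 ^ n)).filter fun i =>
    if i.testBit t then i ∈ S ∧ i - 2 ^ t ∈ S else i ∈ S ∨ i + 2 ^ t ∈ S

/-- Zero-LLR set at stage `t` for puncturing set `X`, for a polar code of length `2^n`: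
`Zstage n X n = X` and `Zstage n X t = zstep n t (Zstage n X (t+1))` for `t < n`. -/
def Zstage (n : ℕ) (X : Finset ℕ) (t : ℕ) : Finset ℕ :=
  if _h : n ≤ t then X else zstep n t (Zstage n X (t + 1))
termination_by n - t
decreasing_by omega

/-- The incapable set resulting from puncturing set `X`. -/
def Up (n : ℕ) (X : Finset ℕ) : Finset ℕ := Zstage n X 0

/-!
By downward induction on the stage: if `Q ⊆ D_j` and `i ⪯ j` agrees with `j` on the bits `≥ t`,
then `i ∈ Z_t(Q)` iff `Q` contains every `k ⪯ j` congruent to `i` modulo `2 ^ t`. The partner of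
`i` at stage `t` is `i ^^^ 2 ^ t`. Where `j` has a `1` the rule is an AND over the two classes
modulo `2 ^ (t + 1)` into which the class of `i` splits; where `j` has a `0` it is an OR, but the
partner lies outside `D_j`, which contains every `Z_t(Q)`. At stage `0` this reads
`j ∈ U_p(Q) ↔ D_j ⊆ Q`, which gives both claims.
-/

theorem Nat.add_two_pow_eq_xor_of_testBit_eq_false {i t : ℕ} (h : i.testBit t = false) :
    i + 2 ^ t = i ^^^ 2 ^ t := by
  have hr : i % 2 ^ (t + 1) < 2 ^ t := by
    by_contra! hle
    have := Nat.testBit_of_two_pow_le_and_two_pow_add_one_gt hle (Nat.mod_lt _ (by positivity))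
    simp [Nat.testBit_mod_two_pow, h] at this
  have hor : i ||| 2 ^ t = i ^^^ 2 ^ t := Nat.eq_of_testBit_eq fun s => by
    by_cases hs : t = s
    · subst hs; simp [h]
    · simp [hs]
  calc i + 2 ^ t = 2 ^ (t + 1) * (i / 2 ^ (t + 1)) + (i % 2 ^ (t + 1) + 2 ^ t) := by
        have := Nat.div_add_mod i (2 ^ (t + 1)); omega
    _ = 2 ^ (t + 1) * (i / 2 ^ (t + 1)) ||| i % 2 ^ (t + 1) ||| 2 ^ t := by
        have hlt : i % 2 ^ (t + 1) ||| 2 ^ t < 2 ^ (t + 1) := by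
          rw [Nat.or_two_pow_eq_add_of_lt hr]; have := Nat.pow_succ 2 t; omega
        rw [← Nat.or_two_pow_eq_add_of_lt hr, Nat.two_pow_add_eq_or_of_lt hlt, Nat.or_assoc]
    _ = i ^^^ 2 ^ t := by
        rw [← Nat.two_pow_add_eq_or_of_lt (Nat.mod_lt _ (by positivity)), Nat.div_add_mod, hor]

theorem Nat.sub_two_pow_eq_xor_of_testBit_eq_true {i t : ℕ} (h : i.testBit t = true) :
    i - 2 ^ t = i ^^^ 2 ^ t := by
  have h' : (i ^^^ 2 ^ t).testBit t = false := by simp [h]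
  have := Nat.add_two_pow_eq_xor_of_testBit_eq_false h'
  rw [Nat.xor_assoc, Nat.xor_self, Nat.xor_zero] at this
  omega

theorem bdom_trans {i j k : ℕ} (hij : bdom i j) (hjk : bdom j k) : bdom i k :=
  fun t ht => hjk t (hij t ht)

theorem bdom_xor_two_pow_of_testBit_eq_false {i t : ℕ} (h : i.testBit t = false) :
    bdom i (i ^^^ 2 ^ t) := by
  intro s hs
  have hts : t ≠ s := by rintro rfl; rw [h] at hs; contradiction
  simp [hs, hts]

theorem bdom_xor_two_pow_of_testBit_eq_true {i t : ℕ} (h : i.testBit t = true) :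
    bdom (i ^^^ 2 ^ t) i := by
  intro s hs
  have hts : t ≠ s := by rintro rfl; simp [h] at hs
  simpa [hts] using hs

def dominatedSet (n j : ℕ) : Finset ℕ := (Finset.range (2 ^ n)).filter fun k => bdom k j

theorem coe_dominatedSet {n j : ℕ} (hj : j < 2 ^ n) :
    (dominatedSet n j : Set ℕ) = {k | bdom k j} := by
  ext k
  simp only [dominatedSet, Finset.coe_filter, Finset.mem_range, Set.mem_ofPred_eq]
  exact ⟨And.right, fun hk => ⟨(Nat.le_of_testBit hk).trans_lt hj, hk⟩⟩

/-- The positions `k ⪯ j` congruent to `i` modulo `2 ^ t`: the stage-`n` nodes of the decoding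
graph that feed node `i` of stage `t`, once the positions outside `D_j` are discarded. -/
def dominatedFiber (j t i : ℕ) : Set ℕ := {k | bdom k j ∧ ∀ s < t, k.testBit s = i.testBit s}

theorem dominatedFiber_zero (j i : ℕ) : dominatedFiber j 0 i = {k | bdom k j} := by
  simp [dominatedFiber]

theorem dominatedFiber_eq_singleton {j t i : ℕ} (hj : j < 2 ^ t) (hij : bdom i j) :
    dominatedFiber j t i = {i} := by
  have lt_of_bdom {k s} (hk : bdom k j) (hs : t ≤ s) : k < 2 ^ s :=
    (Nat.le_of_testBit hk).trans_lt (hj.trans_le (Nat.pow_le_pow_right two_pos hs))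
  ext k
  refine ⟨fun ⟨hkj, hki⟩ => Nat.eq_of_testBit_eq fun s => ?_,
    by rintro rfl; exact ⟨hij, fun _ _ => rfl⟩⟩
  rcases lt_or_ge s t with hs | hs
  · exact hki s hs
  · rw [Nat.testBit_lt_two_pow (lt_of_bdom hkj hs), Nat.testBit_lt_two_pow (lt_of_bdom hij hs)]

theorem dominatedFiber_eq_union (j t i : ℕ) :
    dominatedFiber j t i =
      dominatedFiber j (t + 1) i ∪ dominatedFiber j (t + 1) (i ^^^ 2 ^ t) := by
  ext k
  have low : (∀ s < t, k.testBit s = (i ^^^ 2 ^ t).testBit s) ↔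
      ∀ s < t, k.testBit s = i.testBit s :=
    forall₂_congr fun s hs => by simp [show t ≠ s by omega]
  simp only [dominatedFiber, Set.mem_union, Set.mem_ofPred_eq, Nat.forall_lt_succ_right]
  rw [low]
  cases k.testBit t <;> cases hit : i.testBit t <;> simp [hit]

theorem dominatedFiber_succ {j t i : ℕ} (hjt : j.testBit t = false) (hit : i.testBit t = false) :
    dominatedFiber j (t + 1) i = dominatedFiber j t i := by
  ext k
  simp only [dominatedFiber, Set.mem_ofPred_eq, Nat.forall_lt_succ_right, hit]
  refine ⟨fun ⟨hkj, hki, _⟩ => ⟨hkj, hki⟩, fun ⟨hkj, hki⟩ => ⟨hkj, hki, ?_⟩⟩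
  by_contra hkt
  simpa [hjt] using hkj t (by simpa using hkt)

theorem Zstage_of_le {n t : ℕ} (X : Finset ℕ) (h : n ≤ t) : Zstage n X t = X := by
  rw [Zstage, dif_pos h]

theorem Zstage_of_lt {n t : ℕ} (X : Finset ℕ) (h : t < n) :
    Zstage n X t = zstep n t (Zstage n X (t + 1)) := by
  rw [Zstage, dif_neg h.not_ge]

theorem mem_zstep_of_testBit_eq_true {n t i : ℕ} {S : Finset ℕ} (h : i.testBit t = true) :
    i ∈ zstep n t S ↔ i < 2 ^ n ∧ i ∈ S ∧ i ^^^ 2 ^ t ∈ S := by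
  simp [zstep, h, Nat.sub_two_pow_eq_xor_of_testBit_eq_true h]

theorem mem_zstep_of_testBit_eq_false {n t i : ℕ} {S : Finset ℕ} (h : i.testBit t = false) :
    i ∈ zstep n t S ↔ i < 2 ^ n ∧ (i ∈ S ∨ i ^^^ 2 ^ t ∈ S) := by
  simp [zstep, h, Nat.add_two_pow_eq_xor_of_testBit_eq_false h]

theorem zstep_subset_dominatedSet {n t j : ℕ} {S : Finset ℕ} (hS : S ⊆ dominatedSet n j) :
    zstep n t S ⊆ dominatedSet n j := by
  intro i hi
  cases hit : i.testBit t
  · obtain ⟨hin, hiS | hi'S⟩ := (mem_zstep_of_testBit_eq_false hit).1 hi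
    · exact hS hiS
    · have hi'j := (Finset.mem_filter.1 (hS hi'S)).2
      exact Finset.mem_filter.2
        ⟨Finset.mem_range.2 hin, bdom_trans (bdom_xor_two_pow_of_testBit_eq_false hit) hi'j⟩
  · exact hS ((mem_zstep_of_testBit_eq_true hit).1 hi).2.1

theorem Zstage_subset_dominatedSet {n j : ℕ} {Q : Finset ℕ} (hQ : Q ⊆ dominatedSet n j) (t : ℕ) :
    Zstage n Q t ⊆ dominatedSet n j := by
  by_cases htn : n ≤ t
  · rwa [Zstage_of_le Q htn]
  · rw [Zstage_of_lt Q (not_le.1 htn)]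
    exact zstep_subset_dominatedSet (Zstage_subset_dominatedSet hQ (t + 1))
termination_by n - t

theorem mem_Zstage_iff_dominatedFiber_subset {n j : ℕ} {Q : Finset ℕ} (hj : j < 2 ^ n)
    (hQ : Q ⊆ dominatedSet n j) (t : ℕ) {i : ℕ} (hij : bdom i j)
    (hhigh : ∀ s, t ≤ s → i.testBit s = j.testBit s) :
    i ∈ Zstage n Q t ↔ dominatedFiber j t i ⊆ Q := by
  by_cases htn : n ≤ t
  · rw [Zstage_of_le Q htn, dominatedFiber_eq_singleton
      (hj.trans_le (Nat.pow_le_pow_right two_pos htn)) hij, Set.singleton_subset_iff,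
      Finset.mem_coe]
  have ih {i : ℕ} (hij : bdom i j) (hhigh : ∀ s, t + 1 ≤ s → i.testBit s = j.testBit s) :=
    mem_Zstage_iff_dominatedFiber_subset hj hQ (t + 1) hij hhigh
  have hin : i < 2 ^ n := (Nat.le_of_testBit hij).trans_lt hj
  have hhigh_succ : ∀ s, t + 1 ≤ s → i.testBit s = j.testBit s := fun s hs => hhigh s (by omega)
  rw [Zstage_of_lt Q (not_le.1 htn)]
  cases hjt : j.testBit t
  · have hit : i.testBit t = false := (hhigh t le_rfl).trans hjt
    have hi' : i ^^^ 2 ^ t ∉ Zstage n Q (t + 1) := fun h => by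
      simpa [hit, hjt] using (Finset.mem_filter.1 (Zstage_subset_dominatedSet hQ _ h)).2 t
    rw [mem_zstep_of_testBit_eq_false hit, or_iff_left hi', ih hij hhigh_succ,
      dominatedFiber_succ hjt hit, and_iff_right hin]
  · have hit : i.testBit t = true := (hhigh t le_rfl).trans hjt
    have hhigh' : ∀ s, t + 1 ≤ s → (i ^^^ 2 ^ t).testBit s = j.testBit s := fun s hs => by
      simp [show t ≠ s by omega, hhigh s (by omega)]
    rw [mem_zstep_of_testBit_eq_true hit, ih hij hhigh_succ,
      ih (bdom_trans (bdom_xor_two_pow_of_testBit_eq_true hit) hij) hhigh',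
      dominatedFiber_eq_union j t i, Set.union_subset_iff, and_iff_right hin]
termination_by n - t

theorem mem_Up_iff_dominatedSet_subset {n j : ℕ} {Q : Finset ℕ} (hj : j < 2 ^ n)
    (hQ : Q ⊆ dominatedSet n j) : j ∈ Up n Q ↔ dominatedSet n j ⊆ Q := by
  rw [Up, mem_Zstage_iff_dominatedFiber_subset hj hQ 0 (fun _ h => h) (fun _ _ => rfl),
    dominatedFiber_zero, ← coe_dominatedSet hj, Finset.coe_subset]

theorem dominated_set_minimal_pattern_general (n : ℕ) (j : ℕ) (hj : j < 2 ^ n) :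
    j ∈ Up n ((Finset.range (2 ^ n)).filter fun k => bdom k j) ∧
      ∀ Q ⊂ (Finset.range (2 ^ n)).filter (fun k => bdom k j), j ∉ Up n Q :=
  ⟨(mem_Up_iff_dominatedSet_subset hj subset_rfl).2 subset_rfl, fun _ hQ hjQ =>
    hQ.not_subset ((mem_Up_iff_dominatedSet_subset hj hQ.subset).1 hjQ)⟩

/-- the dominated set `D_j = {k < 2^n : k ⪯ j}` is a minimal puncturing
bit pattern making encoder input bit `j` incapable. -/
theorem dominated_set_minimal_pattern (n : ℕ) (hn : 1 ≤ n) (j : ℕ) (hj : j < 2 ^ n) :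
    j ∈ Up n ((Finset.range (2 ^ n)).filter fun k => bdom k j) ∧
      ∀ Q ⊂ (Finset.range (2 ^ n)).filter (fun k => bdom k j), j ∉ Up n Q :=
  dominated_set_minimal_pattern_general n j hj
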